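/- Let Π = (P, 𝓛) be a finite projective plane of order n with n prime, let m ≥ 1, and suppose there exists a non-constant line-invariant function v : P → ℤ/mℤ. Then n divides m. -/

import Mathlib

open Configuration

/-- The sum of `v` over the points of the line `l`. -/
noncomputable def lineSum {P L G : Type*} [Membership P L] [AddCommMonoid G]
    (v : P → G) (l : L) : G :=
  ∑ᶠ x ∈ {x : P | x ∈ l}, v x

/-- `v : P → G` is line invariant if its sum along every line of `L` is the same. -/
def LineInvariant (P L : Type*) {G : Type*} [Membership P L] [AddCommMonoid G]
    (v : P → G) : Prop :=
  ∀ l l' : L, lineSum v l = lineSum v l'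

/-!
Summing a line-invariant `v` with line sum `s` over the `n + 1` lines through a point `p`
counts `p` itself `n + 1` times and every other point exactly once, so
`n • v p + ∑ x, v x = (n + 1) • s` for every `p`. Hence `n • (v a - v b) = 0` in `ℤ/mℤ`;
if `v a ≠ v b` then `n` is not a unit of `ℤ/mℤ`, and for `n` prime this means `n ∣ m`.
-/

open Finset

theorem ZMod.prime_dvd_of_nsmul_eq_zero {p m : ℕ} (hp : p.Prime) {x : ZMod m} (hx : x ≠ 0)
    (h : p • x = 0) : p ∣ m := by
  by_contra hpm
  have hunit : IsUnit (p : ZMod m) :=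
    (ZMod.isUnit_iff_coprime p m).2 ((hp.coprime_iff_not_dvd).2 hpm)
  rw [nsmul_eq_mul] at h
  exact hx (hunit.mul_right_eq_zero.1 h)

namespace Configuration

variable {P L G : Type*} [Membership P L]

open scoped Classical in
theorem lineSum_eq_sum_filter [Fintype P] [AddCommMonoid G] (v : P → G) (l : L) :
    lineSum v l = ∑ x ∈ univ.filter (· ∈ l), v x := by
  rw [lineSum, ← finsum_mem_coe_finset]
  congr 1
  simp

variable [Fintype L]

open scoped Classical in
theorem card_filter_lines_through_pair [HasLines P L] {p x : P} (hxp : x ≠ p) :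
    #(univ.filter fun l : L => p ∈ l ∧ x ∈ l) = 1 := by
  rw [card_eq_one]
  refine ⟨HasLines.mkLine hxp.symm, ext fun l => ?_⟩
  have hmk := HasLines.mkLine_ax (L := L) hxp.symm
  simp only [mem_filter, mem_univ, true_and, mem_singleton]
  constructor
  · rintro ⟨hpl, hxl⟩
    exact (Nondegenerate.eq_or_eq hpl hxl hmk.1 hmk.2).resolve_left hxp.symm
  · rintro rfl
    exact hmk

open scoped Classical in
theorem sum_lineSum_lines_through [Fintype P] [HasLines P L] [AddCommMonoid G] (v : P → G)
    (p : P) :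
    ∑ l ∈ univ.filter fun l : L => p ∈ l, lineSum v l
      = lineCount L p • v p + ∑ x ∈ univ.erase p, v x := by
  have hcount : #(univ.filter fun l : L => p ∈ l ∧ p ∈ l) = lineCount L p := by
    simp [lineCount, Nat.card_eq_fintype_card, Fintype.card_subtype]
  calc ∑ l ∈ univ.filter fun l : L => p ∈ l, lineSum v l
      = ∑ l ∈ univ.filter fun l : L => p ∈ l, ∑ x : P, if x ∈ l then v x else 0 := by
        simp only [lineSum_eq_sum_filter, sum_filter]
    _ = ∑ x : P, ∑ l ∈ univ.filter fun l : L => p ∈ l, if x ∈ l then v x else 0 :=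
        sum_comm
    _ = ∑ x : P, #(univ.filter fun l : L => p ∈ l ∧ x ∈ l) • v x := by
        refine sum_congr rfl fun x _ => ?_
        rw [← sum_filter, sum_const, filter_filter]
    _ = lineCount L p • v p + ∑ x ∈ univ.erase p, v x := by
        rw [← add_sum_erase _ _ (mem_univ p), hcount]
        congr 1
        refine sum_congr rfl fun x hx => ?_
        rw [card_filter_lines_through_pair (ne_of_mem_erase hx), one_smul]

open scoped Classical in
theorem ProjectivePlane.sum_lineSum_lines_through [Fintype P] [ProjectivePlane P L]
    [AddCommMonoid G] (v : P → G) (p : P) :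
    ∑ l ∈ univ.filter fun l : L => p ∈ l, lineSum v l
      = ProjectivePlane.order P L • v p + ∑ x, v x := by
  rw [Configuration.sum_lineSum_lines_through, ProjectivePlane.lineCount_eq, succ_nsmul,
    add_assoc, add_sum_erase _ _ (mem_univ p)]

theorem _root_.LineInvariant.order_nsmul_eq [Fintype P] [ProjectivePlane P L]
    [AddCancelCommMonoid G] {v : P → G} (hv : LineInvariant P L v) (a b : P) :
    ProjectivePlane.order P L • v a = ProjectivePlane.order P L • v b := by
  classical
  obtain rfl | hab := eq_or_ne a b
  · rfl
  have hconst : ∀ p : P, ∑ l ∈ univ.filter fun l : L => p ∈ l, lineSum v l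
      = (ProjectivePlane.order P L + 1) • lineSum v (HasLines.mkLine (L := L) hab) := by
    intro p
    rw [← ProjectivePlane.lineCount_eq (L := L) p, lineCount, Nat.card_eq_fintype_card,
      Fintype.card_subtype, ← sum_const]
    exact sum_congr rfl fun l _ => hv _ _
  have hsum := (hconst a).trans (hconst b).symm
  rw [ProjectivePlane.sum_lineSum_lines_through, ProjectivePlane.sum_lineSum_lines_through]
    at hsum
  exact add_right_cancel hsum

end Configuration

theorem stmt_9_general {P L : Type*} [Membership P L] [Fintype P] [Fintype L]
    [ProjectivePlane P L] {n : ℕ} (hn : ProjectivePlane.order P L = n) (hp : n.Prime)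
    (m : ℕ)
    (h : ∃ v : P → ZMod m, LineInvariant P L v ∧ ¬ ∀ a b : P, v a = v b) :
    n ∣ m := by
  obtain ⟨v, hv, hnc⟩ := h
  obtain ⟨a, b, hab⟩ : ∃ a b, v a ≠ v b := by simpa only [not_forall] using hnc
  refine ZMod.prime_dvd_of_nsmul_eq_zero hp (sub_ne_zero.2 hab) ?_
  rw [smul_sub, ← hn, hv.order_nsmul_eq a b, sub_self]

/-- If a projective plane of prime order `n` is pseudomagic over `ℤ/mℤ`, then `n ∣ m`. -/
theorem stmt_9 {P L : Type*} [Membership P L] [Fintype P] [Fintype L]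
    [ProjectivePlane P L] {n : ℕ} (hn : ProjectivePlane.order P L = n) (hp : n.Prime)
    (m : ℕ) (hm : 1 ≤ m)
    (h : ∃ v : P → ZMod m, LineInvariant P L v ∧ ¬ ∀ a b : P, v a = v b) :
    n ∣ m :=
  stmt_9_general hn hp m h
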